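/- arXiv:2512.13772 — 2 statements merged into one kernel-verified Lean document; each statement's English description precedes it below -/
import Mathlib

section
/- Let α and β be ordinals and let γ be an instance of a sum of α and β. Then α +_min β ≤ γ ≤ α ♯ β. -/
universe u

namespace Ordinal

/-- Natural (Hessenberg) addition of ordinals, as `Ordinal.nadd` was defined in Mathlib
(December 2024); it is no longer in Mathlib. -/
noncomputable def nadd : Ordinal.{u} → Ordinal.{u} → Ordinal.{u}
  | a, b =>
    max (blsub.{u, u} a fun a' _ => nadd a' b) (blsub.{u, u} b fun b' _ => nadd a b')
termination_by o₁ o₂ => (o₁, o₂)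

end Ordinal

infixl:65 " ♯ " => Ordinal.nadd

/-- `γ` is an *instance of a sum* of `α` and `β`: the set of ordinals below `γ` can be
partitioned into two subsets whose induced orders have order types `α` and `β`
(equivalently, are order-isomorphic to the sets of ordinals below `α` resp. `β`). -/
def IsSumInstance (γ α β : Ordinal.{u}) : Prop :=
  ∃ s : Set Ordinal.{u}, s ⊆ Set.Iio γ ∧
    Nonempty (↥s ≃o ↥(Set.Iio α)) ∧ Nonempty (↥(Set.Iio γ \ s) ≃o ↥(Set.Iio β))

/-- The *min sum* of ordinals: writing `α = ω·α' + m` and `β = ω·β' + n` with `m, n < ω`,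
`α +_min β = max α β` if `α' ≠ β'`, and `α +_min β = α + n` if `α' = β'`. -/
noncomputable def minSum (α β : Ordinal.{u}) : Ordinal.{u} :=
  if α / Ordinal.omega0 = β / Ordinal.omega0 then α + β % Ordinal.omega0 else max α β

namespace Ordinal

theorem nadd_eq_aux (a b : Ordinal.{u}) : a ♯ b =
    max (blsub.{u, u} a fun a' _ => a' ♯ b) (blsub.{u, u} b fun b' _ => a ♯ b') := by
  rw [nadd]

theorem nadd_lt_nadd_right {a b : Ordinal.{u}} (h : a < b) (c : Ordinal.{u}) : a ♯ c < b ♯ c := by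
  rw [nadd_eq_aux b c]
  exact lt_max_of_lt_left (lt_blsub (fun a' _ => a' ♯ c) a h)

theorem nadd_lt_nadd_left {b c : Ordinal.{u}} (h : b < c) (a : Ordinal.{u}) : a ♯ b < a ♯ c := by
  rw [nadd_eq_aux a c]
  exact lt_max_of_lt_right (lt_blsub (fun b' _ => a ♯ b') b h)

theorem nadd_le_nadd_right {a b : Ordinal.{u}} (h : a ≤ b) (c : Ordinal.{u}) : a ♯ c ≤ b ♯ c := by
  rcases h.lt_or_eq with h | h
  · exact (nadd_lt_nadd_right h c).le
  · rw [h]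

theorem nadd_le_nadd_left {b c : Ordinal.{u}} (h : b ≤ c) (a : Ordinal.{u}) : a ♯ b ≤ a ♯ c := by
  rcases h.lt_or_eq with h | h
  · exact (nadd_lt_nadd_left h a).le
  · rw [h]

end Ordinal

lemma auxLeApply {a : Ordinal.{u}} (h : Set.Iio a → Ordinal.{u})
    (mono : StrictMono h) (x : Ordinal.{u}) : ∀ (hx : x < a), x ≤ h ⟨x, hx⟩ := by
  induction x using Ordinal.induction with
  | _ x IH =>
    intro hx
    refine le_of_forall_lt fun z hz => ?_
    exact lt_of_le_of_lt (IH z hz (hz.trans hx))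
      (mono (show (⟨z, hz.trans hx⟩ : Set.Iio a) < ⟨x, hx⟩ from hz))

lemma auxTypeLe {a c : Ordinal.{u}} (h : Set.Iio a → Ordinal.{u})
    (mono : StrictMono h) (bound : ∀ x, h x < c) : a ≤ c :=
  le_of_forall_lt fun x hx => lt_of_le_of_lt (auxLeApply h mono x hx) (bound _)

/-- Any bounded set of ordinals is order isomorphic to an initial segment. -/
lemma auxExistsIso {c : Ordinal.{u}} (t : Set Ordinal.{u}) (ht : t ⊆ Set.Iio c) :
    ∃ b : Ordinal.{u}, Nonempty (↥t ≃o ↥(Set.Iio b)) := by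
  let e := Ordinal.ToType.mk (o := c)
  let φ : ↥t → c.ToType := fun u => e ⟨u.1, ht u.2⟩
  have hφ : StrictMono φ := fun u v huv => e.lt_iff_lt.2 huv
  let i1 : ↥t ≃o ↥(Set.range φ) := hφ.orderIso φ
  let r : ↥(Set.range φ) → ↥(Set.range φ) → Prop := (· < ·)
  refine ⟨Ordinal.type r, ⟨i1.trans (StrictMono.orderIsoOfSurjective
    (fun x => ⟨Ordinal.typein r x, Ordinal.typein_lt_type r x⟩) ?_ ?_)⟩⟩
  · intro x y hxy
    exact (Ordinal.typein_lt_typein r).2 hxy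
  · rintro ⟨o, ho⟩
    obtain ⟨x, hx⟩ := Ordinal.typein_surj r ho
    exact ⟨x, by simp [hx]⟩

/-- position ≤ value: for an iso onto an initial segment, preimages dominate. -/
lemma auxLeSymm {t : Set Ordinal.{u}} {b : Ordinal.{u}} (e : ↥t ≃o ↥(Set.Iio b))
    (y : ↥(Set.Iio b)) : (y : Ordinal) ≤ ((e.symm y : ↥t) : Ordinal) := by
  have mono : StrictMono (fun z : ↥(Set.Iio b) => ((e.symm z : ↥t) : Ordinal)) := by
    intro z z' hz
    exact_mod_cast e.symm.lt_iff_lt.2 hz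
  exact auxLeApply _ mono y.1 y.2

lemma auxIsoLe {t : Set Ordinal.{u}} {b c : Ordinal.{u}} (e : ↥t ≃o ↥(Set.Iio b))
    (ht : ∀ x ∈ t, x < c) : b ≤ c := by
  refine auxTypeLe (fun z => ((e.symm z : ↥t) : Ordinal)) ?_ ?_
  · intro z z' hz
    exact_mod_cast e.symm.lt_iff_lt.2 hz
  · exact fun z => ht _ (e.symm z).2

lemma auxViaIso {s t : Set Ordinal.{u}} {α b c : Ordinal.{u}}
    (f : ↥s ≃o ↥(Set.Iio α)) (hts : t ⊆ s) (e : ↥t ≃o ↥(Set.Iio b))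
    (hb : ∀ u : ↥t, ((f ⟨u.1, hts u.2⟩ : ↥(Set.Iio α)) : Ordinal) < c) : b ≤ c := by
  refine auxTypeLe (fun z => ((f ⟨(e.symm z).1, hts (e.symm z).2⟩ : ↥(Set.Iio α)) : Ordinal)) ?_ ?_
  · intro z z' hz
    have h1 : ((e.symm z : ↥t) : Ordinal) < ((e.symm z' : ↥t) : Ordinal) := by
      exact_mod_cast e.symm.lt_iff_lt.2 hz
    have h2 : (⟨(e.symm z).1, hts (e.symm z).2⟩ : ↥s) < ⟨(e.symm z').1, hts (e.symm z').2⟩ := h1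
    exact_mod_cast f.lt_iff_lt.2 h2
  · exact fun z => hb _

lemma auxUpper (γ : Ordinal.{u}) : ∀ α β : Ordinal.{u}, IsSumInstance γ α β → γ ≤ α ♯ β := by
  induction γ using Ordinal.induction with
  | _ γ IH =>
    rintro α β ⟨s, hs, ⟨f⟩, ⟨g⟩⟩
    refine le_of_forall_lt fun x hx => ?_
    set A : Set Ordinal.{u} := {y | y ∈ s ∧ y < x} with hA
    have hsub : A ⊆ s := fun y hy => hy.1
    have hsub' : Set.Iio x \ A ⊆ Set.Iio γ \ s := by
      rintro y ⟨hy1, hy2⟩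
      exact ⟨hy1.trans hx, fun hys => hy2 ⟨hys, hy1⟩⟩
    obtain ⟨a, ⟨ea⟩⟩ := auxExistsIso (c := γ) A (fun y hy => hs hy.1)
    obtain ⟨b, ⟨eb⟩⟩ := auxExistsIso (c := γ) (Set.Iio x \ A)
      (fun y hy => hy.1.trans hx)
    have hinst : IsSumInstance x a b := ⟨A, fun y hy => hy.2, ⟨ea⟩, ⟨eb⟩⟩
    have ha : a ≤ α := auxViaIso f hsub ea (fun u => (f ⟨u.1, hsub u.2⟩).2)
    have hb : b ≤ β := auxViaIso g hsub' eb (fun u => (g ⟨u.1, hsub' u.2⟩).2)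
    have hx' := IH x hx a b hinst
    by_cases hxs : x ∈ s
    · have ha' : a < α := by
        have h1 : a ≤ ((f ⟨x, hxs⟩ : ↥(Set.Iio α)) : Ordinal) := by
          refine auxViaIso f hsub ea fun u => ?_
          have : (⟨u.1, hsub u.2⟩ : ↥s) < ⟨x, hxs⟩ := u.2.2
          exact_mod_cast f.lt_iff_lt.2 this
        exact h1.trans_lt (f ⟨x, hxs⟩).2
      exact hx'.trans_lt (lt_of_lt_of_le (Ordinal.nadd_lt_nadd_right ha' b)
        (Ordinal.nadd_le_nadd_left hb α))
    · have hxc : x ∈ Set.Iio γ \ s := ⟨hx, hxs⟩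
      have hb' : b < β := by
        have h1 : b ≤ ((g ⟨x, hxc⟩ : ↥(Set.Iio β)) : Ordinal) := by
          refine auxViaIso g hsub' eb fun u => ?_
          have : (⟨u.1, hsub' u.2⟩ : ↥(Set.Iio γ \ s)) < ⟨x, hxc⟩ := u.2.1
          exact_mod_cast g.lt_iff_lt.2 this
        exact h1.trans_lt (g ⟨x, hxc⟩).2
      exact hx'.trans_lt (lt_of_le_of_lt (Ordinal.nadd_le_nadd_right ha b)
        (Ordinal.nadd_lt_nadd_left hb' α))

open Ordinal Set in
/-- **Bounds on instances of a sum of two ordinals.** If `γ` is an instance of a sum of `α`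
and `β`, then `α +_min β ≤ γ ≤ α ♯ β`, where `♯` is the Hessenberg sum. -/
theorem minSum_le_sum_instance_le_nadd {γ α β : Ordinal.{u}}
    (h : IsSumInstance γ α β) :
    minSum α β ≤ γ ∧ γ ≤ α ♯ β := by

  obtain ⟨s, hs, ⟨f⟩, ⟨g⟩⟩ := h
  have hαγ : α ≤ γ := auxIsoLe f hs
  have hβγ : β ≤ γ := auxIsoLe g (fun x hx => hx.1)
  refine ⟨?_, auxUpper γ α β ⟨s, hs, ⟨f⟩, ⟨g⟩⟩⟩
  unfold minSum
  split_ifs with hq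
  · -- α + β % ω ≤ γ
    obtain ⟨m, hm⟩ := Ordinal.lt_omega0.1 (Ordinal.mod_lt α Ordinal.omega0_ne_zero)
    obtain ⟨n, hn⟩ := Ordinal.lt_omega0.1 (Ordinal.mod_lt β Ordinal.omega0_ne_zero)
    set δ : Ordinal.{u} := Ordinal.omega0 * (α / Ordinal.omega0) with hδ
    have hαeq : δ + (m : Ordinal) = α := by rw [← hm]; exact Ordinal.div_add_mod α _
    have hβeq : δ + (n : Ordinal) = β := by rw [hδ, hq, ← hn]; exact Ordinal.div_add_mod β _
    rw [hn]
    by_contra hcon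
    push_neg at hcon
    have hδγ : δ ≤ γ := le_trans (le_trans (le_self_add (a := δ) (b := (m : Ordinal))) hαeq.le) hαγ
    have hγlt : γ < δ + ((m + n : ℕ) : Ordinal) := by
      rw [Nat.cast_add, ← add_assoc, hαeq]; exact hcon
    have hpos : (0 : Ordinal) < ((m + n : ℕ) : Ordinal) := by
      rcases (zero_le (a := ((m + n : ℕ) : Ordinal))).lt_or_eq with h0 | h0
      · exact h0
      · exfalso; rw [← h0, add_zero] at hγlt; exact absurd hδγ (not_le.2 hγlt)
    have hsublt : γ - δ < ((m + n : ℕ) : Ordinal) := Ordinal.sub_lt_of_lt_add hγlt hpos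
    obtain ⟨k, hk⟩ := Ordinal.lt_omega0.1 (hsublt.trans (Ordinal.nat_lt_omega0 _))
    have hkmn : k < m + n := by rw [hk] at hsublt; exact_mod_cast hsublt
    have hym : ∀ i : Fin m, δ + ((i : ℕ) : Ordinal) < α := by
      intro i; rw [← hαeq]
      exact (add_lt_add_iff_left δ).2 (by exact_mod_cast i.2)
    have hzn : ∀ j : Fin n, δ + ((j : ℕ) : Ordinal) < β := by
      intro j; rw [← hβeq]
      exact (add_lt_add_iff_left δ).2 (by exact_mod_cast j.2)
    set yy : Fin m → ↥s := fun i => f.symm ⟨δ + ((i : ℕ) : Ordinal), hym i⟩ with hyy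
    set zz : Fin n → ↥(Set.Iio γ \ s) := fun j => g.symm ⟨δ + ((j : ℕ) : Ordinal), hzn j⟩ with hzz
    set uu : Fin m ⊕ Fin n → Ordinal.{u} :=
      Sum.elim (fun i => (yy i : Ordinal)) (fun j => (zz j : Ordinal)) with huu
    have hδu : ∀ i, δ ≤ uu i := by
      rintro (i | j)
      · exact le_trans (le_self_add (a := δ)) (auxLeSymm f ⟨δ + ((i : ℕ) : Ordinal), hym i⟩)
      · exact le_trans (le_self_add (a := δ)) (auxLeSymm g ⟨δ + ((j : ℕ) : Ordinal), hzn j⟩)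
    have huγ : ∀ i, uu i < γ := by
      rintro (i | j)
      · exact hs (yy i).2
      · exact (zz j).2.1
    have hmem1 : ∀ i : Fin m, uu (Sum.inl i) ∈ s := fun i => (yy i).2
    have hmem2 : ∀ j : Fin n, uu (Sum.inr j) ∉ s := fun j => (zz j).2.2
    have huinj : Function.Injective uu := by
      rintro (i | j) (i' | j') hij
      · have : yy i = yy i' := Subtype.ext hij
        have := f.symm.injective this
        have h2 : δ + ((i : ℕ) : Ordinal) = δ + ((i' : ℕ) : Ordinal) :=
          congrArg Subtype.val this
        have h3 : ((i : ℕ) : Ordinal) = ((i' : ℕ) : Ordinal) := (add_left_cancel_iff (a := δ)).1 h2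
        exact congrArg Sum.inl (Fin.ext (by exact_mod_cast h3))
      · exact absurd (hij ▸ hmem1 i) (hmem2 j')
      · exact absurd (hij.symm ▸ hmem1 i') (hmem2 j)
      · have : zz j = zz j' := Subtype.ext hij
        have := g.symm.injective this
        have h2 : δ + ((j : ℕ) : Ordinal) = δ + ((j' : ℕ) : Ordinal) :=
          congrArg Subtype.val this
        have h3 : ((j : ℕ) : Ordinal) = ((j' : ℕ) : Ordinal) := (add_left_cancel_iff (a := δ)).1 h2
        exact congrArg Sum.inr (Fin.ext (by exact_mod_cast h3))
    have hlt : ∀ i, uu i - δ < ((k : ℕ) : Ordinal) := by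
      intro i
      rw [← hk]
      have h1 : δ + (uu i - δ) < δ + (γ - δ) := by
        rw [Ordinal.add_sub_cancel_of_le (hδu i), Ordinal.add_sub_cancel_of_le hδγ]
        exact huγ i
      exact (add_lt_add_iff_left δ).1 h1
    have hltω : ∀ i, uu i - δ < Ordinal.omega0 :=
      fun i => (hlt i).trans (Ordinal.nat_lt_omega0 k)
    let N : Fin m ⊕ Fin n → ℕ := fun i => Classical.choose (Ordinal.lt_omega0.1 (hltω i))
    have hN : ∀ i, uu i - δ = ((N i : ℕ) : Ordinal) :=
      fun i => Classical.choose_spec (Ordinal.lt_omega0.1 (hltω i))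
    have hNk : ∀ i, N i < k := by
      intro i
      have := hlt i
      rw [hN i] at this
      exact_mod_cast this
    have hNinj : Function.Injective N := by
      intro i j hij
      apply huinj
      have h1 : uu i - δ = uu j - δ := by rw [hN i, hN j, hij]
      calc uu i = δ + (uu i - δ) := (Ordinal.add_sub_cancel_of_le (hδu i)).symm
        _ = δ + (uu j - δ) := by rw [h1]
        _ = uu j := Ordinal.add_sub_cancel_of_le (hδu j)
    have hcard : Fintype.card (Fin m ⊕ Fin n) ≤ Fintype.card (Fin k) :=
      Fintype.card_le_of_injective (fun i => (⟨N i, hNk i⟩ : Fin k))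
        (fun i j hij => hNinj (congrArg Fin.val hij))
    simp only [Fintype.card_sum, Fintype.card_fin] at hcard
    omega
  · exact max_le hαγ hβγ
end

section
/- There exists a family of 2^{ℵ₀} pairwise non-isomorphic countable linear orders, each of which is an instance of a sum of ℚ and ℚ; that is, each member of the family can be partitioned into two subsets each of which, with the induced order, is order-isomorphic to the rationals. -/
namespace ContSum

/-- dyadic rationals -/
def IsDyadic (q : ℚ) : Prop := ∃ (a : ℤ) (m : ℕ), q = (a : ℚ) / 2 ^ m

lemma IsDyadic.add {x y : ℚ} : IsDyadic x → IsDyadic y → IsDyadic (x + y) := by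
  rintro ⟨a, m, rfl⟩ ⟨b, k, rfl⟩
  refine ⟨a * 2 ^ k + b * 2 ^ m, m + k, ?_⟩
  have h1 : ((2:ℚ)) ^ m ≠ 0 := by positivity
  have h2 : ((2:ℚ)) ^ k ≠ 0 := by positivity
  push_cast
  rw [div_add_div _ _ h1 h2, div_eq_div_iff (by positivity) (by positivity)]
  ring

lemma IsDyadic.neg {x : ℚ} : IsDyadic x → IsDyadic (-x) := by
  rintro ⟨a, m, rfl⟩
  exact ⟨-a, m, by push_cast; ring⟩

lemma not_isDyadic_third : ¬ IsDyadic (1/3 : ℚ) := by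
  rintro ⟨a, m, h⟩
  have h2 : ((2:ℚ)) ^ m ≠ 0 := by positivity
  have h3 : (2:ℚ) ^ m = 3 * a := by
    field_simp at h
    linarith
  have hz : (2:ℤ) ^ m = 3 * a := by exact_mod_cast h3
  have hdvd : (3:ℤ) ∣ 2 ^ m := ⟨a, hz⟩
  have := Int.prime_three.dvd_of_dvd_pow hdvd
  norm_num at this

lemma exists_dyadic_btwn {a b : ℚ} (h : a < b) : ∃ q : ℚ, IsDyadic q ∧ a < q ∧ q < b := by
  obtain ⟨m, hm⟩ := pow_unbounded_of_one_lt (R := ℚ) (b - a)⁻¹ one_lt_two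
  have hpow : (0:ℚ) < 2 ^ m := by positivity
  have hgap : 1 / (2:ℚ) ^ m < b - a := by
    rw [div_lt_iff₀ hpow]
    have hba : 0 < b - a := by linarith
    calc (1:ℚ) = (b-a) * (b-a)⁻¹ := by field_simp
    _ < (b-a) * 2 ^ m := by exact mul_lt_mul_of_pos_left hm hba
  refine ⟨(⌊a * 2 ^ m⌋ + 1) / 2 ^ m, ⟨⌊a * 2 ^ m⌋ + 1, m, by push_cast; ring⟩, ?_, ?_⟩
  · rw [lt_div_iff₀ hpow]
    have := Int.lt_floor_add_one (a * 2 ^ m)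
    push_cast
    linarith
  · rw [div_lt_iff₀ hpow]
    have := Int.floor_le (a * 2 ^ m)
    have : (⌊a * 2 ^ m⌋ : ℚ) + 1 ≤ a * 2 ^ m + 1 := by linarith
    have h2 : a * 2 ^ m + 1 < b * 2 ^ m := by
      have := (div_lt_iff₀ hpow).mp hgap
      nlinarith
    push_cast
    linarith

lemma exists_nondyadic_btwn {a b : ℚ} (h : a < b) : ∃ q : ℚ, ¬ IsDyadic q ∧ a < q ∧ q < b := by
  obtain ⟨d, hd, h1, h2⟩ := exists_dyadic_btwn (show a - 1/3 < b - 1/3 by linarith)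
  refine ⟨d + 1/3, ?_, by linarith, by linarith⟩
  intro hdy
  apply not_isDyadic_third
  have : (1/3 : ℚ) = (d + 1/3) + (-d) := by ring
  rw [this]
  exact hdy.add hd.neg

end ContSum

namespace ContSum

variable {g : ℕ → Bool}

/-- block length: 2 or 3 -/
def len (g : ℕ → Bool) (n : ℕ) : ℕ := bif g n then 3 else 2

lemma two_le_len : 2 ≤ len g n := by unfold len; cases g n <;> simp
lemma len_le_three : len g n ≤ 3 := by unfold len; cases g n <;> simp

/-- marker positions -/
def mk (n i : ℕ) : ℚ := 5 * (n : ℚ) + 3/2 + (i : ℚ)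

lemma mk_lt_mk {n i j : ℕ} (h : i < j) : mk n i < mk n j := by
  unfold mk
  have : (i:ℚ) < j := by exact_mod_cast h
  linarith

lemma mk_lb (n i : ℕ) : 5 * (n:ℚ) + 3/2 ≤ mk n i := by
  unfold mk; have : (0:ℚ) ≤ i := by positivity
  linarith

lemma mk_ub {n i : ℕ} (h : i ≤ 2) : mk n i ≤ 5 * (n:ℚ) + 7/2 := by
  unfold mk; have : (i:ℚ) ≤ 2 := by exact_mod_cast h
  linarith

lemma mk_inj {n m i j : ℕ} (hi : i ≤ 2) (hj : j ≤ 2) (h : mk n i = mk m j) :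
    n = m ∧ i = j := by
  unfold mk at h
  have hc : ((5*n+i : ℕ) : ℚ) = ((5*m+j : ℕ) : ℚ) := by push_cast; linarith
  have : 5*n+i = 5*m+j := by exact_mod_cast hc
  omega

lemma isDyadic_mk (n i : ℕ) : IsDyadic (mk n i) :=
  ⟨10*n + 3 + 2*i, 1, by unfold mk; push_cast; ring⟩

/-- the pattern set: markers plus dyadic intervals -/
def P (g : ℕ → Bool) : Set ℚ :=
  {q | (∃ n i, i < len g n ∧ q = mk n i) ∨
       (∃ n : ℕ, IsDyadic q ∧ 5*(n:ℚ)+4 < q ∧ q < 5*(n:ℚ)+5)}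

lemma marker_mem {n i : ℕ} (h : i < len g n) : mk n i ∈ P g := Or.inl ⟨n, i, h, rfl⟩

lemma dyadic_mem {n : ℕ} {q : ℚ} (h1 : IsDyadic q) (h2 : 5*(n:ℚ)+4 < q) (h3 : q < 5*(n:ℚ)+5) :
    q ∈ P g := Or.inr ⟨n, h1, h2, h3⟩

lemma mem_P_isDyadic {q : ℚ} (h : q ∈ P g) : IsDyadic q := by
  rcases h with ⟨n, i, _, rfl⟩ | ⟨n, hd, _, _⟩
  · exact isDyadic_mk n i
  · exact hd

/-- index walker -/
def σ (g : ℕ → Bool) : ℕ → ℕ × ℕ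
  | 0 => (0, 0)
  | k+1 => if (σ g k).2 + 1 < len g (σ g k).1 then ((σ g k).1, (σ g k).2 + 1)
           else ((σ g k).1 + 1, 0)

lemma σ_snd_lt (k : ℕ) : (σ g k).2 < len g (σ g k).1 := by
  induction k with
  | zero => simpa [σ] using lt_of_lt_of_le (by norm_num) (two_le_len (g := g) (n := 0))
  | succ k ih =>
    rw [σ]
    split
    · simpa using ‹(σ g k).2 + 1 < len g (σ g k).1›
    · simpa using lt_of_lt_of_le (by norm_num) (two_le_len (g := g))

def pos (g : ℕ → Bool) : ℕ → ℕ
  | 0 => 0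
  | n+1 => pos g n + len g n

lemma σ_pos (n : ℕ) : σ g (pos g n) = (n, 0) := by
  induction n with
  | zero => rfl
  | succ n ih =>
    have step : ∀ i, i < len g n → σ g (pos g n + i) = (n, i) := by
      intro i
      induction i with
      | zero => intro _; simpa using ih
      | succ i ih2 =>
        intro h
        have h' : i < len g n := by omega
        have : pos g n + (i+1) = (pos g n + i) + 1 := by omega
        rw [this, σ, ih2 h']
        simp [h]
    have h1 : len g n - 1 < len g n := by have := two_le_len (g := g) (n := n); omega
    have hlast := step _ h1
    have h2 : pos g (n+1) = (pos g n + (len g n - 1)) + 1 := by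
      rw [pos]; have := two_le_len (g := g) (n := n); omega
    rw [h2, σ, hlast]
    have h3 : ¬ ((len g n - 1) + 1 < len g n) := by omega
    have h4 : len g n - 1 + 1 = len g n := by
      have := two_le_len (g := g) (n := n); omega
    simp [h3, h4]

lemma σ_pos_add {n i : ℕ} (h : i < len g n) : σ g (pos g n + i) = (n, i) := by
  induction i with
  | zero => simpa using σ_pos n
  | succ i ih =>
    have h' : i < len g n := by omega
    have heq : pos g n + (i+1) = (pos g n + i) + 1 := by omega
    rw [heq, σ, ih h']
    simp [h]

end ContSum

namespace ContSum

variable {g : ℕ → Bool}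

/-- covers in a subtype of a linear order -/
lemma covBy_subtype_iff {α : Type*} [LinearOrder α] {s : Set α} (a b : ↥s) :
    a ⋖ b ↔ (a:α) < b ∧ ∀ c ∈ s, ¬((a:α) < c ∧ c < (b:α)) := by
  constructor
  · rintro ⟨h1, h2⟩
    exact ⟨h1, fun c hc hh => @h2 ⟨c, hc⟩ hh.1 hh.2⟩
  · rintro ⟨h1, h2⟩
    exact ⟨h1, fun c hac hcb => h2 c c.2 ⟨hac, hcb⟩⟩

lemma nat_le_of_qlt {n m : ℕ} (h : 5*(n:ℚ) < 5*(m:ℚ) + 4) : n ≤ m := by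
  by_contra hc
  push_neg at hc
  have : (m:ℚ) + 1 ≤ (n:ℚ) := by exact_mod_cast hc
  linarith

/-- characterization of covers in `P g` -/
lemma covP {a b : ↥(P g)} :
    a ⋖ b ↔ ∃ n i, i + 1 < len g n ∧ (a:ℚ) = mk n i ∧ (b:ℚ) = mk n (i+1) := by
  rw [covBy_subtype_iff]
  constructor
  · rintro ⟨hab, hno⟩
    rcases a.2 with ⟨n, i, hi, ha⟩ | ⟨n, hda, ha4, ha5⟩
    · rcases b.2 with ⟨m, j, hj, hb⟩ | ⟨m, hdb, hb4, hb5⟩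
      · -- marker, marker
        have hi2 : i ≤ 2 := by have := len_le_three (g := g) (n := n); omega
        have hj2 : j ≤ 2 := by have := len_le_three (g := g) (n := m); omega
        have hnm : n ≤ m := by
          apply nat_le_of_qlt
          have h1 := mk_lb n i
          have h2 := mk_ub (n := m) hj2
          rw [ha, hb] at hab
          linarith
        rcases Nat.lt_or_ge n m with hlt | hge
        · -- different blocks: dyadic between
          exfalso
          obtain ⟨d, hd, hd1, hd2⟩ := exists_dyadic_btwn
            (show 5*(n:ℚ)+4 < 5*(n:ℚ)+5 by linarith)
          refine hno d (dyadic_mem hd hd1 hd2) ⟨?_, ?_⟩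
          · have := mk_ub (n := n) hi2; rw [ha]; linarith
          · have h1 := mk_lb m j
            have : (n:ℚ) + 1 ≤ m := by exact_mod_cast hlt
            rw [hb]; linarith
        · have hnm' : n = m := le_antisymm hnm hge
          subst hnm'
          have hij : i < j := by
            by_contra hc
            push_neg at hc
            rcases lt_or_eq_of_le hc with h | h
            · have := mk_lt_mk (n := n) h; rw [ha, hb] at hab; linarith
            · subst h; rw [ha, hb] at hab; exact lt_irrefl _ hab
          rcases Nat.lt_or_ge (i+1) j with hlt | hge2
          · exfalso
            refine hno (mk n (i+1)) (marker_mem (by omega)) ⟨?_, ?_⟩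
            · rw [ha]; exact mk_lt_mk (by omega)
            · rw [hb]; exact mk_lt_mk hlt
          · have : j = i + 1 := by omega
            subst this
            exact ⟨n, i, by omega, ha, hb⟩
      · -- marker, dyadic: impossible (no cover)
        exfalso
        have hi2 : i ≤ 2 := by have := len_le_three (g := g) (n := n); omega
        have hnm : n ≤ m := by
          apply nat_le_of_qlt
          have h1 := mk_lb n i
          rw [ha] at hab
          linarith
        obtain ⟨d, hd, hd1, hd2⟩ := exists_dyadic_btwn hb4
        refine hno d (dyadic_mem hd hd1 (lt_trans hd2 hb5)) ⟨?_, hd2⟩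
        have h2 := mk_ub (n := n) hi2
        have : (n:ℚ) ≤ m := by exact_mod_cast hnm
        rw [ha]; linarith
    · -- dyadic, anything: impossible
      exfalso
      have hmin : (a:ℚ) < min (b:ℚ) (5*(n:ℚ)+5) := lt_min hab ha5
      obtain ⟨d, hd, hd1, hd2⟩ := exists_dyadic_btwn hmin
      have hd5 : d < 5*(n:ℚ)+5 := lt_of_lt_of_le hd2 (min_le_right _ _)
      refine hno d (dyadic_mem hd (lt_trans ha4 hd1) hd5)
        ⟨hd1, lt_of_lt_of_le hd2 (min_le_left _ _)⟩
  · rintro ⟨n, i, hlen, ha, hb⟩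
    have hi2 : i ≤ 2 := by have := len_le_three (g := g) (n := n); omega
    constructor
    · rw [ha, hb]; exact mk_lt_mk (by omega)
    · rintro c hc ⟨h1, h2⟩
      rw [ha] at h1
      rw [hb] at h2
      have hcl : 5*(n:ℚ) + 3/2 < c := lt_of_le_of_lt (mk_lb n i) h1
      have hcu : c < 5*(n:ℚ) + 7/2 + 1 := by
        have := mk_ub (n := n) (i := i+1) (by have := len_le_three (g := g) (n := n); omega)
        -- mk n (i+1) ≤ 5n + 7/2, so c < 5n+7/2
        linarith
      have hcu' : c < 5*(n:ℚ) + 7/2 := by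
        have := mk_ub (n := n) (i := i+1) (by have := len_le_three (g := g) (n := n); omega)
        linarith
      rcases hc with ⟨m, j, hjlen, hceq⟩ | ⟨m, hdc, hc4, hc5⟩
      · have hj2 : j ≤ 2 := by have := len_le_three (g := g) (n := m); omega
        subst hceq
        -- compare blocks
        rcases Nat.lt_trichotomy m n with h | h | h
        · have : (m:ℚ) + 1 ≤ n := by exact_mod_cast h
          have := mk_ub (n := m) hj2
          linarith
        · subst h
          -- same block: i < j < i+1 impossible
          unfold mk at h1 h2
          have e1 : (i:ℚ) < j := by linarith
          have e2 : (j:ℚ) < (i:ℚ) + 1 := by push_cast at h2 ⊢; linarith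
          have f1 : i < j := by exact_mod_cast e1
          have f2 : (j:ℚ) < ((i+1 : ℕ) : ℚ) := by push_cast; linarith
          have f2' : j < i + 1 := by exact_mod_cast f2
          omega
        · have : (n:ℚ) + 1 ≤ m := by exact_mod_cast h
          have := mk_lb m j
          linarith
      · rcases Nat.lt_or_ge m n with h | h
        · have : (m:ℚ) + 1 ≤ n := by exact_mod_cast h
          linarith
        · have : (n:ℚ) ≤ m := by exact_mod_cast h
          linarith

end ContSum

namespace ContSum

variable {g : ℕ → Bool}

def mval (g : ℕ → Bool) (k : ℕ) : ℚ := mk (σ g k).1 (σ g k).2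

def mpt (g : ℕ → Bool) (k : ℕ) : ↥(P g) := ⟨mval g k, marker_mem (σ_snd_lt k)⟩

lemma σ_succ_of_lt {k : ℕ} (h : (σ g k).2 + 1 < len g (σ g k).1) :
    σ g (k+1) = ((σ g k).1, (σ g k).2 + 1) := by
  rw [σ]; simp [h]

lemma σ_succ_of_ge {k : ℕ} (h : ¬ ((σ g k).2 + 1 < len g (σ g k).1)) :
    σ g (k+1) = ((σ g k).1 + 1, 0) := by
  rw [σ]; simp [h]

lemma strictMono_mpt : StrictMono (mpt g) := by
  apply strictMono_nat_of_lt_succ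
  intro k
  show mval g k < mval g (k+1)
  unfold mval
  by_cases h : (σ g k).2 + 1 < len g (σ g k).1
  · rw [σ_succ_of_lt h]
    exact mk_lt_mk (by omega)
  · rw [σ_succ_of_ge h]
    have h1 : (σ g k).2 ≤ 2 := by
      have := σ_snd_lt (g := g) k
      have := len_le_three (g := g) (n := (σ g k).1)
      omega
    have h2 := mk_ub (n := (σ g k).1) h1
    have h3 := mk_lb ((σ g k).1 + 1) 0
    simp only
    have : ((σ g k).1 + 1 : ℚ) = ((σ g k).1 : ℚ) + 1 := by push_cast; ring
    calc mk (σ g k).1 (σ g k).2 ≤ 5 * ((σ g k).1:ℚ) + 7/2 := h2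
    _ < 5 * (((σ g k).1 + 1 : ℕ):ℚ) + 3/2 := by push_cast; linarith
    _ ≤ mk ((σ g k).1 + 1) 0 := mk_lb _ 0

def Mset (g : ℕ → Bool) : Set ↥(P g) := {x | (∃ y, x ⋖ y) ∨ (∃ y, y ⋖ x)}

lemma mpt_eq {n i : ℕ} (h : i < len g n) : mpt g (pos g n + i) = ⟨mk n i, marker_mem h⟩ := by
  apply Subtype.ext
  show mval g (pos g n + i) = mk n i
  unfold mval
  rw [σ_pos_add h]

lemma range_mpt : Set.range (mpt g) = Mset g := by
  ext x
  constructor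
  · rintro ⟨k, rfl⟩
    have hlt := σ_snd_lt (g := g) k
    by_cases h : (σ g k).2 + 1 < len g (σ g k).1
    · exact Or.inl ⟨⟨mk (σ g k).1 ((σ g k).2 + 1), marker_mem h⟩,
        covP.mpr ⟨(σ g k).1, (σ g k).2, h, rfl, rfl⟩⟩
    · have h1 : 1 ≤ (σ g k).2 := by
        have := two_le_len (g := g) (n := (σ g k).1); omega
      refine Or.inr ⟨⟨mk (σ g k).1 ((σ g k).2 - 1), marker_mem (by omega)⟩,
        covP.mpr ⟨(σ g k).1, (σ g k).2 - 1, by omega, rfl, ?_⟩⟩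
      show mval g k = mk (σ g k).1 ((σ g k).2 - 1 + 1)
      unfold mval
      congr 1
      omega
  · rintro (⟨y, hxy⟩ | ⟨y, hyx⟩)
    · obtain ⟨n, i, hlen, ha, _⟩ := covP.mp hxy
      refine ⟨pos g n + i, ?_⟩
      rw [mpt_eq (by omega)]
      exact Subtype.ext ha.symm
    · obtain ⟨n, i, hlen, _, hb⟩ := covP.mp hyx
      refine ⟨pos g n + (i+1), ?_⟩
      rw [mpt_eq hlen]
      exact Subtype.ext hb.symm

lemma cov_mpt_iff {k : ℕ} :
    mpt g k ⋖ mpt g (k+1) ↔ (σ g k).2 + 1 < len g (σ g k).1 := by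
  constructor
  · intro hc
    obtain ⟨n, i, hlen, ha, hb⟩ := covP.mp hc
    have hb1 : (σ g k).2 ≤ 2 := by
      have := σ_snd_lt (g := g) k
      have := len_le_three (g := g) (n := (σ g k).1); omega
    have hi2 : i ≤ 2 := by have := len_le_three (g := g) (n := n); omega
    obtain ⟨e1, e2⟩ := mk_inj hb1 hi2 ha
    rw [e1, e2]
    exact hlen
  · intro h
    refine covP.mpr ⟨(σ g k).1, (σ g k).2, h, rfl, ?_⟩
    show mval g (k+1) = _
    unfold mval
    rw [σ_succ_of_lt h]

lemma two_lt_len_iff : (2 < len g n) ↔ g n = true := by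
  unfold len; cases g n <;> simp

theorem pattern_inj {g h : ℕ → Bool}
    (hpat : ∀ k, ((σ g k).2 + 1 < len g (σ g k).1 ↔ (σ h k).2 + 1 < len h (σ h k).1)) :
    g = h := by
  have key : ∀ p n, pos g n = p → pos h n = p → g n = h n := by
    intro p n hg hh
    have e1 : σ g (p + 1) = (n, 1) := by
      rw [← hg]
      exact σ_pos_add (lt_of_lt_of_le one_lt_two two_le_len)
    have e2 : σ h (p + 1) = (n, 1) := by
      rw [← hh]
      exact σ_pos_add (lt_of_lt_of_le one_lt_two two_le_len)
    have := hpat (p + 1)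
    rw [e1, e2] at this
    have hiff : (g n = true) ↔ (h n = true) := by
      rw [← two_lt_len_iff, ← two_lt_len_iff]
      convert this using 2 <;> omega
    cases hgn : g n <;> cases hhn : h n <;> simp_all
  have hpos : ∀ n, pos g n = pos h n := by
    intro n
    induction n with
    | zero => rfl
    | succ n ih =>
      have hgn := key (pos g n) n rfl ih.symm
      show pos g n + len g n = pos h n + len h n
      rw [← ih]
      congr 1
      unfold len
      rw [hgn]
  funext n
  exact key (pos g n) n rfl (hpos n).symm

end ContSum

namespace ContSum

variable {g h : ℕ → Bool}

def X (g : ℕ → Bool) : Set (ℚ ×ₗ Bool) :=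
  {x | (ofLex x).2 = true → (ofLex x).1 ∉ P g}

def el (q : ℚ) (b : Bool) : ℚ ×ₗ Bool := toLex (q, b)

lemma lex_lt (x y : ℚ ×ₗ Bool) :
    x < y ↔ (ofLex x).1 < (ofLex y).1 ∨ ((ofLex x).1 = (ofLex y).1 ∧ (ofLex x).2 < (ofLex y).2) :=
  Prod.Lex.lt_iff

lemma el_false_mem {q : ℚ} : el q false ∈ X g := by
  intro hb
  exact absurd hb (by simp [el])

lemma val_eq_el_false {x : ↥(X g)} (hb : (ofLex x.val).2 = false) :
    x.val = el (ofLex x.val).1 false := by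
  show x.val = toLex ((ofLex x.val).1, false)
  rw [← hb]
  rfl

lemma covX {x y : ↥(X g)} :
    x ⋖ y ↔ (ofLex x.val).1 = (ofLex y.val).1 ∧ (ofLex x.val).2 = false ∧
      (ofLex y.val).2 = true := by
  rw [covBy_subtype_iff]
  constructor
  · rintro ⟨h1, h2⟩
    rw [lex_lt] at h1
    rcases h1 with hlt | ⟨heq, hb⟩
    · exfalso
      obtain ⟨r, hr1, hr2⟩ := exists_between hlt
      refine h2 (el r false) el_false_mem ⟨?_, ?_⟩
      · rw [lex_lt]; exact Or.inl hr1
      · rw [lex_lt]; exact Or.inl hr2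
    · obtain ⟨hbf, hbt⟩ := Bool.lt_iff.mp hb
      exact ⟨heq, hbf, hbt⟩
  · rintro ⟨heq, hxf, hyt⟩
    constructor
    · rw [lex_lt]
      exact Or.inr ⟨heq, by rw [hxf, hyt]; exact Bool.false_lt_true⟩
    · rintro c hc ⟨h1, h2⟩
      rw [lex_lt] at h1 h2
      rcases h1 with h1 | ⟨e1, b1⟩ <;> rcases h2 with h2 | ⟨e2, b2⟩
      · rw [heq] at h1; exact absurd (h1.trans h2) (lt_irrefl _)
      · rw [heq, ← e2] at h1; exact absurd h1 (lt_irrefl _)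
      · rw [← e1, heq] at h2; exact absurd h2 (lt_irrefl _)
      · rw [hxf] at b1
        rw [hyt] at b2
        have c1 : (ofLex c).2 = true := (Bool.lt_iff.mp b1).2
        have c2' : (ofLex c).2 = false := (Bool.lt_iff.mp b2).1
        rw [c1] at c2'
        exact Bool.false_ne_true c2'.symm

def IsNC (x : ↥(X g)) : Prop := (∀ y, ¬ x ⋖ y) ∧ (∀ y, ¬ y ⋖ x)

lemma isNC_iff {x : ↥(X g)} :
    IsNC x ↔ (ofLex x.val).2 = false ∧ (ofLex x.val).1 ∈ P g := by
  constructor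
  · rintro ⟨h1, h2⟩
    rcases hb : (ofLex x.val).2 with _ | _
    · refine ⟨rfl, ?_⟩
      by_contra hp
      have hmem : el (ofLex x.val).1 true ∈ X g := fun _ => hp
      exact h1 ⟨_, hmem⟩ (covX.mpr ⟨rfl, hb, rfl⟩)
    · exfalso
      exact h2 ⟨_, el_false_mem⟩ (covX.mpr ⟨rfl, rfl, hb⟩)
  · rintro ⟨hb, hp⟩
    constructor
    · intro y hc
      obtain ⟨he, _, hyt⟩ := covX.mp hc
      have := y.2 hyt
      rw [← he] at this
      exact this hp
    · intro y hc
      obtain ⟨_, _, hxt⟩ := covX.mp hc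
      rw [hb] at hxt
      exact Bool.false_ne_true hxt

lemma isNC_map (e : ↥(X g) ≃o ↥(X h)) {x : ↥(X g)} (hx : IsNC x) : IsNC (e x) := by
  obtain ⟨h1, h2⟩ := hx
  constructor
  · intro y hc
    rw [← e.apply_symm_apply y] at hc
    exact h1 (e.symm y) ((apply_covBy_apply_iff e).mp hc)
  · intro y hc
    rw [← e.apply_symm_apply y] at hc
    exact h2 (e.symm y) ((apply_covBy_apply_iff e).mp hc)

/-- base point of a pattern element inside `X g` -/
def basept (q : ↥(P g)) : ↥(X g) := ⟨el q.val false, el_false_mem⟩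

lemma isNC_basept (q : ↥(P g)) : IsNC (basept q) := isNC_iff.mpr ⟨rfl, q.2⟩

def ψfun (e : ↥(X g) ≃o ↥(X h)) (q : ↥(P g)) : ↥(P h) :=
  ⟨(ofLex (e (basept q)).val).1, (isNC_iff.mp (isNC_map e (isNC_basept q))).2⟩

lemma e_basept (e : ↥(X g) ≃o ↥(X h)) (q : ↥(P g)) :
    e (basept q) = basept (ψfun e q) := by
  apply Subtype.ext
  exact val_eq_el_false (isNC_iff.mp (isNC_map e (isNC_basept q))).1

lemma basept_lt_iff {q r : ↥(P g)} : basept q < basept r ↔ q < r := by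
  show (⟨el q.val false, _⟩ : ↥(X g)) < ⟨el r.val false, _⟩ ↔ _
  rw [Subtype.mk_lt_mk, lex_lt]
  constructor
  · rintro (hlt | ⟨_, hb⟩)
    · exact hlt
    · exact absurd hb (lt_irrefl _)
  · intro hlt
    exact Or.inl hlt

lemma ψfun_strictMono (e : ↥(X g) ≃o ↥(X h)) : StrictMono (ψfun e) := by
  intro q r hqr
  rw [← basept_lt_iff, ← e_basept, ← e_basept]
  exact e.strictMono (basept_lt_iff.mpr hqr)

lemma ψfun_surjective (e : ↥(X g) ≃o ↥(X h)) : Function.Surjective (ψfun e) := by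
  intro p
  have hx : IsNC (e.symm (basept p)) := isNC_map e.symm (isNC_basept p)
  obtain ⟨hb, hp⟩ := isNC_iff.mp hx
  refine ⟨⟨(ofLex (e.symm (basept p)).val).1, hp⟩, ?_⟩
  have hbase : basept (⟨(ofLex (e.symm (basept p)).val).1, hp⟩ : ↥(P g)) = e.symm (basept p) :=
    Subtype.ext (val_eq_el_false hb).symm
  apply Subtype.ext
  show (ofLex (e (basept _)).val).1 = p.val
  rw [hbase, e.apply_symm_apply]
  rfl

noncomputable def ψ (e : ↥(X g) ≃o ↥(X h)) : ↥(P g) ≃o ↥(P h) :=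
  StrictMono.orderIsoOfSurjective (ψfun e) (ψfun_strictMono e) (ψfun_surjective e)

lemma Mset_image (φ : ↥(P g) ≃o ↥(P h)) : ⇑φ '' Mset g = Mset h := by
  have hmap : ∀ {g' h' : ℕ → Bool} (φ' : ↥(P g') ≃o ↥(P h')) (x : ↥(P g')),
      x ∈ Mset g' → φ' x ∈ Mset h' := by
    rintro g' h' φ' x (⟨y, hxy⟩ | ⟨y, hyx⟩)
    · exact Or.inl ⟨φ' y, (apply_covBy_apply_iff φ').mpr hxy⟩
    · exact Or.inr ⟨φ' y, (apply_covBy_apply_iff φ').mpr hyx⟩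
  apply Set.Subset.antisymm
  · rintro x ⟨y, hy, rfl⟩
    exact hmap φ y hy
  · intro x hx
    exact ⟨φ.symm x, hmap φ.symm x hx, φ.apply_symm_apply x⟩

theorem main_inj (e : ↥(X g) ≃o ↥(X h)) : g = h := by
  have hrange : Set.range (⇑(ψ e) ∘ mpt g) = Set.range (mpt h) := by
    rw [Set.range_comp, range_mpt, Mset_image, ← range_mpt]
  have hmono : StrictMono (⇑(ψ e) ∘ mpt g) := (ψ e).strictMono.comp strictMono_mpt
  have heq : ⇑(ψ e) ∘ mpt g = mpt h := (StrictMono.range_inj hmono strictMono_mpt).mp hrange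
  apply pattern_inj
  intro k
  rw [← cov_mpt_iff (g := g), ← cov_mpt_iff (g := h), ← congrFun heq k, ← congrFun heq (k+1)]
  exact (apply_covBy_apply_iff (ψ e)).symm

end ContSum
namespace ContSum

variable {g : ℕ → Bool}

instance : Countable (ℚ ×ₗ Bool) := inferInstanceAs (Countable (ℚ × Bool))

def Slow (g : ℕ → Bool) : Set ↥(X g) := {x | (ofLex x.val).2 = false}

lemma slow_snd (a : ↥(Slow g)) : (ofLex a.val.val).2 = false := a.2

lemma slow_lt_iff {a b : ↥(Slow g)} :
    a < b ↔ (ofLex a.val.val).1 < (ofLex b.val.val).1 := by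
  rw [← Subtype.coe_lt_coe, ← Subtype.coe_lt_coe, lex_lt]
  constructor
  · rintro (h | ⟨_, hb⟩)
    · exact h
    · rw [slow_snd a, slow_snd b] at hb
      exact absurd hb (lt_irrefl _)
  · exact Or.inl

def mkSlow (g : ℕ → Bool) (q : ℚ) : ↥(Slow g) := ⟨⟨el q false, el_false_mem⟩, rfl⟩

lemma mkSlow_fst (q : ℚ) : (ofLex ((mkSlow g q).val.val)).1 = q := rfl

instance : Nonempty ↥(Slow g) := ⟨mkSlow g 0⟩

instance : DenselyOrdered ↥(Slow g) := by
  constructor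
  intro a b hab
  rw [slow_lt_iff] at hab
  obtain ⟨r, hr1, hr2⟩ := exists_between hab
  exact ⟨mkSlow g r, slow_lt_iff.mpr (by rw [mkSlow_fst]; exact hr1),
    slow_lt_iff.mpr (by rw [mkSlow_fst]; exact hr2)⟩

instance : NoMaxOrder ↥(Slow g) := by
  constructor
  intro a
  refine ⟨mkSlow g ((ofLex a.val.val).1 + 1), slow_lt_iff.mpr ?_⟩
  rw [mkSlow_fst]
  linarith

instance : NoMinOrder ↥(Slow g) := by
  constructor
  intro a
  refine ⟨mkSlow g ((ofLex a.val.val).1 - 1), slow_lt_iff.mpr ?_⟩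
  rw [mkSlow_fst]
  linarith

lemma not_mem_P_of_not_dyadic {q : ℚ} (h : ¬ IsDyadic q) : q ∉ P g :=
  fun hp => h (mem_P_isDyadic hp)

lemma high_snd (a : ↥((Slow g)ᶜ)) : (ofLex a.val.val).2 = true := by
  have := a.2
  simp only [Set.mem_compl_iff, Slow, Set.mem_setOf_eq] at this
  cases hb : (ofLex a.val.val).2
  · exact absurd hb this
  · rfl

lemma high_lt_iff {a b : ↥((Slow g)ᶜ)} :
    a < b ↔ (ofLex a.val.val).1 < (ofLex b.val.val).1 := by
  rw [← Subtype.coe_lt_coe, ← Subtype.coe_lt_coe, lex_lt]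
  constructor
  · rintro (h | ⟨_, hb⟩)
    · exact h
    · rw [high_snd a, high_snd b] at hb
      exact absurd hb (lt_irrefl _)
  · exact Or.inl

def mkHigh (g : ℕ → Bool) (q : ℚ) (hq : q ∉ P g) : ↥((Slow g)ᶜ) :=
  ⟨⟨el q true, fun _ => hq⟩, by
    simp only [Set.mem_compl_iff, Slow, Set.mem_setOf_eq]
    exact fun h => Bool.false_ne_true (h.symm ▸ rfl)⟩

lemma mkHigh_fst (q : ℚ) (hq : q ∉ P g) : (ofLex ((mkHigh g q hq).val.val)).1 = q := rfl

instance : Nonempty ↥((Slow g)ᶜ) :=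
  ⟨mkHigh g (1/3) (not_mem_P_of_not_dyadic not_isDyadic_third)⟩

instance : DenselyOrdered ↥((Slow g)ᶜ) := by
  constructor
  intro a b hab
  rw [high_lt_iff] at hab
  obtain ⟨r, hr, hr1, hr2⟩ := exists_nondyadic_btwn hab
  exact ⟨mkHigh g r (not_mem_P_of_not_dyadic hr), high_lt_iff.mpr hr1, high_lt_iff.mpr hr2⟩

instance : NoMaxOrder ↥((Slow g)ᶜ) := by
  constructor
  intro a
  obtain ⟨r, hr, hr1, _⟩ := exists_nondyadic_btwn
    (show (ofLex a.val.val).1 < (ofLex a.val.val).1 + 1 by linarith)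
  exact ⟨mkHigh g r (not_mem_P_of_not_dyadic hr), high_lt_iff.mpr hr1⟩

instance : NoMinOrder ↥((Slow g)ᶜ) := by
  constructor
  intro a
  obtain ⟨r, hr, _, hr2⟩ := exists_nondyadic_btwn
    (show (ofLex a.val.val).1 - 1 < (ofLex a.val.val).1 by linarith)
  exact ⟨mkHigh g r (not_mem_P_of_not_dyadic hr), high_lt_iff.mpr hr2⟩

end ContSum

open ContSum in
/-- There is a family of `2 ^ ℵ₀` pairwise non-isomorphic countable linear orders, each of
which is an instance of a sum of `ℚ` and `ℚ`: each member can be partitioned into two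
subsets, each order-isomorphic (with the induced order) to the rationals. -/
theorem exists_continuum_many_sum_instances_of_rat :
    ∃ F : (ℕ → Bool) → LinOrd.{0},
      (∀ g h : ℕ → Bool, g ≠ h → IsEmpty (↥(F g) ≃o ↥(F h))) ∧
      (∀ g, Countable ↥(F g)) ∧
      (∀ g, ∃ S : Set ↥(F g), Nonempty (↥S ≃o ℚ) ∧ Nonempty (↥(Sᶜ) ≃o ℚ)) := by
  refine ⟨fun g => LinOrd.of ↥(X g), ?_, ?_, ?_⟩
  · intro g h hgh
    constructor
    intro e
    exact hgh (main_inj e)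
  · intro g
    exact inferInstanceAs (Countable ↥(X g))
  · intro g
    refine ⟨Slow g, ?_, ?_⟩
    · exact Order.iso_of_countable_dense (α := ↥(Slow g)) (β := ℚ)
    · exact Order.iso_of_countable_dense (α := ↥((Slow g)ᶜ)) (β := ℚ)
end
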